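/- arXiv:1508.00125 — 2 statements merged into one kernel-verified Lean document; each statement's English description precedes it below -/
import Mathlib

section
/- Let x ∈ B^n with x ≠ 0 and set n_x := x/|x|. If ℓ, ℓ' ∈ ∂B^n are unit vectors with |⟨n_x, ℓ⟩| = |⟨n_x, ℓ'⟩| (i.e. the angle between the straight line spanned by n_x and the line spanned by ℓ equals the angle between the line spanned by n_x and the line spanned by ℓ'), then 𝒞(x;ℓ) = 𝒞(x;ℓ'). -/
/-!
A linear isometry `T` of `ℝⁿ` preserves the unit ball and commutes with the Laplacian, so
`U ↦ U ∘ T` permutes the competitors in `𝒞`, while `∇(U ∘ T)(x) = T⁻¹ ∇U(T x)`. Hence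
`𝒞(x; T ℓ) = 𝒞(x; ℓ)` whenever `T x = x`. If `⟪x, ℓ⟫ = ⟪x, ℓ'⟫`, the reflection in the
hyperplane `(ℓ - ℓ')ᗮ` fixes `x` and maps `ℓ` to `ℓ'`; the case `⟪x, ℓ⟫ = -⟪x, ℓ'⟫` reduces to
this one because `𝒞(x; -ℓ) = 𝒞(x; ℓ)`.
-/

open Metric Real
open scoped RealInnerProductSpace

noncomputable section

/-- A real-valued function on `ℝⁿ` is harmonic on the open unit ball:
it is `C²` there and its Laplacian vanishes at every point of the ball. -/
def HarmonicOnBall (n : ℕ) (U : EuclideanSpace ℝ (Fin n) → ℝ) : Prop :=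
  ContDiffOn ℝ 2 U (ball 0 1) ∧
    ∀ x ∈ ball (0 : EuclideanSpace ℝ (Fin n)) 1,
      ∑ i : Fin n,
        fderiv ℝ (fun y => fderiv ℝ U y (EuclideanSpace.single i 1)) x
          (EuclideanSpace.single i 1) = 0

/-- `𝒞(x;ℓ)`: the optimal constant in the estimate for the derivative in
direction `ℓ` at `x` of harmonic functions bounded by `1` on the unit ball. -/
def dirConst (n : ℕ) (x ℓ : EuclideanSpace ℝ (Fin n)) : ℝ :=
  sSup { c : ℝ | ∃ U : EuclideanSpace ℝ (Fin n) → ℝ, HarmonicOnBall n U ∧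
    (∀ y ∈ ball (0 : EuclideanSpace ℝ (Fin n)) 1, |U y| ≤ 1) ∧
    c = |⟪gradient U x, ℓ⟫| }

open scoped Laplacian

section
variable {𝕜 E F : Type*} [NontriviallyNormedField 𝕜] [NormedAddCommGroup E] [NormedSpace 𝕜 E]
  [NormedAddCommGroup F] [NormedSpace 𝕜 F]

theorem fderiv_fderiv_apply_const {f : E → F} {x : E}
    (hf : DifferentiableAt 𝕜 (fderiv 𝕜 f) x) (v w : E) :
    fderiv 𝕜 (fun y => fderiv 𝕜 f y v) x w = fderiv 𝕜 (fderiv 𝕜 f) x w v := by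
  simp [fderiv_clm_apply hf (differentiableAt_const v)]

end

section
variable {E G F : Type*} [NormedAddCommGroup E] [InnerProductSpace ℝ E]
  [NormedAddCommGroup G] [InnerProductSpace ℝ G]

theorem inner_gradient_comp_linearIsometryEquiv [CompleteSpace E] [CompleteSpace G]
    (f : E → ℝ) (T : G ≃ₗᵢ[ℝ] E) (x v : G) :
    ⟪gradient (f ∘ T) x, v⟫ = ⟪gradient f (T x), T v⟫ := by
  rw [gradient, gradient, InnerProductSpace.toDual_symm_apply,
    InnerProductSpace.toDual_symm_apply]
  exact DFunLike.congr_fun (T.toContinuousLinearEquiv.comp_right_fderiv (f := f) (x := x)) v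

variable [FiniteDimensional ℝ E] [FiniteDimensional ℝ G] [NormedAddCommGroup F] [NormedSpace ℝ F]

theorem InnerProductSpace.laplacian_comp_linearIsometryEquiv (f : E → F) (T : G ≃ₗᵢ[ℝ] E)
    (x : G) : Δ (f ∘ T) x = Δ f (T x) := by
  let b := stdOrthonormalBasis ℝ G
  have hcomp : iteratedFDeriv ℝ 2 (f ∘ T) x =
      (iteratedFDeriv ℝ 2 f (T x)).compContinuousLinearMap fun _ => (T : G →L[ℝ] E) := by
    rw [← iteratedFDerivWithin_univ, ← iteratedFDerivWithin_univ, ← Set.preimage_univ (f := T)]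
    exact T.toContinuousLinearEquiv.iteratedFDerivWithin_comp_right f uniqueDiffOn_univ
      (Set.mem_univ _) 2
  rw [laplacian_eq_iteratedFDeriv_orthonormalBasis (f ∘ T) b,
    laplacian_eq_iteratedFDeriv_orthonormalBasis f (b.map T)]
  simp [hcomp, iteratedFDeriv_two_apply]

end

section
variable {n : ℕ}

local notation "E" => EuclideanSpace ℝ (Fin n)

theorem laplacian_eq_sum_fderiv_fderiv_single {U : E → ℝ} {x : E} (hU : ContDiffAt ℝ 2 U x) :
    Δ U x = ∑ i : Fin n,
      fderiv ℝ (fun y => fderiv ℝ U y (EuclideanSpace.single i 1)) x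
        (EuclideanSpace.single i 1) := by
  have hd : DifferentiableAt ℝ (fderiv ℝ U) x :=
    (hU.fderiv_right (m := 1) le_rfl).differentiableAt one_ne_zero
  simp [InnerProductSpace.laplacian_eq_iteratedFDeriv_orthonormalBasis U
    (EuclideanSpace.basisFun (Fin n) ℝ), iteratedFDeriv_two_apply, fderiv_fderiv_apply_const hd]

theorem harmonicOnBall_iff {U : E → ℝ} :
    HarmonicOnBall n U ↔ ContDiffOn ℝ 2 U (ball 0 1) ∧ ∀ x ∈ ball (0 : E) 1, Δ U x = 0 :=
  and_congr_right fun hU => forall₂_congr fun x hx => by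
    rw [laplacian_eq_sum_fderiv_fderiv_single (hU.contDiffAt (isOpen_ball.mem_nhds hx))]

theorem HarmonicOnBall.comp_linearIsometryEquiv {U : E → ℝ} (hU : HarmonicOnBall n U)
    (T : E ≃ₗᵢ[ℝ] E) : HarmonicOnBall n (U ∘ T) := by
  rw [harmonicOnBall_iff] at hU ⊢
  have hT : Set.MapsTo T (ball 0 1) (ball 0 1) := fun y hy => by simpa using hy
  refine ⟨hU.1.comp T.toContinuousLinearEquiv.contDiff.contDiffOn hT, fun x hx => ?_⟩
  rw [InnerProductSpace.laplacian_comp_linearIsometryEquiv]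
  exact hU.2 _ (hT hx)

def dirValues (x ℓ : E) : Set ℝ :=
  { c : ℝ | ∃ U : E → ℝ, HarmonicOnBall n U ∧ (∀ y ∈ ball (0 : E) 1, |U y| ≤ 1) ∧
    c = |⟪gradient U x, ℓ⟫| }

theorem dirValues_apply_subset {x : E} (T : E ≃ₗᵢ[ℝ] E) (hTx : T x = x) (ℓ : E) :
    dirValues x (T ℓ) ⊆ dirValues x ℓ := by
  rintro _ ⟨U, hU, hbound, rfl⟩
  refine ⟨U ∘ T, hU.comp_linearIsometryEquiv T, fun y hy => hbound _ (by simpa using hy), ?_⟩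
  rw [inner_gradient_comp_linearIsometryEquiv, hTx]

theorem dirConst_apply_linearIsometryEquiv {x : E} (T : E ≃ₗᵢ[ℝ] E) (hTx : T x = x) (ℓ : E) :
    dirConst n x (T ℓ) = dirConst n x ℓ := by
  have hTx' : T.symm x = x := T.symm_apply_eq.mpr hTx.symm
  show sSup (dirValues x (T ℓ)) = sSup (dirValues x ℓ)
  refine congrArg sSup ((dirValues_apply_subset T hTx ℓ).antisymm ?_)
  simpa using dirValues_apply_subset T.symm hTx' (T ℓ)

theorem dirConst_neg (x ℓ : E) : dirConst n x (-ℓ) = dirConst n x ℓ := by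
  simp only [dirConst, inner_neg_right, abs_neg]

theorem dirConst_eq_of_inner_eq {x ℓ ℓ' : E} (hnorm : ‖ℓ‖ = ‖ℓ'‖) (h : ⟪x, ℓ⟫ = ⟪x, ℓ'⟫) :
    dirConst n x ℓ = dirConst n x ℓ' := by
  let K := (ℝ ∙ (ℓ - ℓ'))ᗮ
  have hxK : x ∈ K := by
    rw [Submodule.mem_orthogonal_singleton_iff_inner_left, inner_sub_right, h, sub_self]
  rw [← Submodule.reflection_sub hnorm, dirConst_apply_linearIsometryEquiv _
    (K.reflection_mem_subspace_eq_self hxK)]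

theorem dirConst_eq_of_abs_inner_eq {x ℓ ℓ' : E} (hnorm : ‖ℓ‖ = ‖ℓ'‖)
    (h : |⟪x, ℓ⟫| = |⟪x, ℓ'⟫|) : dirConst n x ℓ = dirConst n x ℓ' := by
  rcases abs_eq_abs.mp h with h | h
  · exact dirConst_eq_of_inner_eq hnorm h
  · rw [← dirConst_neg x ℓ']
    exact dirConst_eq_of_inner_eq (by rw [hnorm, norm_neg]) (by rw [h, inner_neg_right])

end

theorem dirConst_angle_invariant_general (n : ℕ)
    (x : EuclideanSpace ℝ (Fin n))
    (ℓ ℓ' : EuclideanSpace ℝ (Fin n)) (hℓ : ‖ℓ‖ = 1) (hℓ' : ‖ℓ'‖ = 1)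
    (hangle : |⟪‖x‖⁻¹ • x, ℓ⟫| = |⟪‖x‖⁻¹ • x, ℓ'⟫|) :
    dirConst n x ℓ = dirConst n x ℓ' := by
  have habs : |⟪x, ℓ⟫| = |⟪x, ℓ'⟫| := by
    rcases eq_or_ne x 0 with rfl | hx0
    · simp
    · simpa [real_inner_smul_left, abs_mul, hx0] using hangle
  exact dirConst_eq_of_abs_inner_eq (hℓ.trans hℓ'.symm) habs

/-- If the lines spanned by unit vectors `ℓ` and `ℓ'` make the same angle with
the radial direction `n_x = x/|x|`, then `𝒞(x;ℓ) = 𝒞(x;ℓ')`. -/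
theorem dirConst_angle_invariant (n : ℕ) (hn : 2 < n)
    (x : EuclideanSpace ℝ (Fin n)) (hx : ‖x‖ < 1) (hx0 : x ≠ 0)
    (ℓ ℓ' : EuclideanSpace ℝ (Fin n)) (hℓ : ‖ℓ‖ = 1) (hℓ' : ‖ℓ'‖ = 1)
    (hangle : |⟪‖x‖⁻¹ • x, ℓ⟫| = |⟪‖x‖⁻¹ • x, ℓ'⟫|) :
    dirConst n x ℓ = dirConst n x ℓ' :=
  dirConst_angle_invariant_general n x ℓ ℓ' hℓ hℓ' hangle
end
end

section
/- Let a, b > 0 with a/b ≤ n − 1. Then for every γ ≥ 0: (1/√(1+γ²)) · ∫₀¹ √(a γ² t² + b) · (1 − t²)^{(n−4)/2} dt ≤ ∫₀¹ √b · (1 − t²)^{(n−4)/2} dt; that is, the supremum over γ ≥ 0 of the left-hand side is attained at γ = 0. Moreover, if a/b < n − 1, then the inequality is strict for every γ > 0, so γ = 0 is the unique maximizer. -/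
/-!
Write `W = ∫₀¹ (1-t²)^s` and `T = ∫₀¹ t² (1-t²)^s` with `s = (n-4)/2`; integrating
`d/dt [t (1-t²)^{s+1}]` over `[0,1]` gives `W = (n-1) T`. Bounding
`√((aγ²t² + b)/(1+γ²))` by AM–GM against `√b` makes the left-hand side at most
`√b W - γ² (bW - aT) / (2(1+γ²)√b)`, and `bW - aT = (b(n-1) - a) T` is nonnegative,
and positive when `a/b < n-1`.
-/

open Real Set intervalIntegral
open MeasureTheory (volume)

lemma sqrt_le_add_div_two_sqrt {x c : ℝ} (hx : 0 ≤ x) (hc : 0 < c) :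
    √x ≤ (x + c) / (2 * √c) := by
  rw [le_div_iff₀ (by positivity)]
  calc √x * (2 * √c) = 2 * √x * √c := by ring
    _ ≤ √x ^ 2 + √c ^ 2 := two_mul_le_add_sq _ _
    _ = x + c := by rw [sq_sqrt hx, sq_sqrt hc.le]

lemma inv_sqrt_mul_integral_sqrt_le {w : ℝ → ℝ} (hw : IntervalIntegrable w volume 0 1)
    (hw_nonneg : ∀ t ∈ Icc (0 : ℝ) 1, 0 ≤ w t) {a b : ℝ} (ha : 0 ≤ a) (hb : 0 < b)
    (γ : ℝ) :
    1 / √(1 + γ ^ 2) * ∫ t in (0 : ℝ)..1, √(a * (γ * t) ^ 2 + b) * w t ≤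
      √b * (∫ t in (0 : ℝ)..1, w t) -
        γ ^ 2 * (b * (∫ t in (0 : ℝ)..1, w t) - a * ∫ t in (0 : ℝ)..1, t ^ 2 * w t) /
          (2 * (1 + γ ^ 2) * √b) := by
  set u := 1 + γ ^ 2
  have hu : 0 < u := by positivity
  have hwt : IntervalIntegrable (fun t => t ^ 2 * w t) volume 0 1 :=
    hw.continuousOn_mul (by fun_prop)
  have hpointwise : ∀ t ∈ Icc (0 : ℝ) 1, 1 / √u * (√(a * (γ * t) ^ 2 + b) * w t) ≤
      (a * γ ^ 2 / u) / (2 * √b) * (t ^ 2 * w t) + (1 / u + 1) * b / (2 * √b) * w t := by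
    intro t ht
    have hx : 0 ≤ (a * (γ * t) ^ 2 + b) / u := by positivity
    have hsqrt := sqrt_le_add_div_two_sqrt hx hb
    rw [sqrt_div' _ hu.le] at hsqrt
    calc 1 / √u * (√(a * (γ * t) ^ 2 + b) * w t)
        = √(a * (γ * t) ^ 2 + b) / √u * w t := by ring
      _ ≤ ((a * (γ * t) ^ 2 + b) / u + b) / (2 * √b) * w t :=
        mul_le_mul_of_nonneg_right hsqrt (hw_nonneg t ht)
      _ = _ := by ring
  calc 1 / √u * ∫ t in (0 : ℝ)..1, √(a * (γ * t) ^ 2 + b) * w t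
      = ∫ t in (0 : ℝ)..1, 1 / √u * (√(a * (γ * t) ^ 2 + b) * w t) :=
        (integral_const_mul _ _).symm
    _ ≤ ∫ t in (0 : ℝ)..1,
          (a * γ ^ 2 / u) / (2 * √b) * (t ^ 2 * w t) + (1 / u + 1) * b / (2 * √b) * w t :=
        integral_mono_on zero_le_one ((hw.continuousOn_mul (by fun_prop)).const_mul _)
          ((hwt.const_mul _).add (hw.const_mul _)) hpointwise
    _ = _ := by
      rw [integral_add (hwt.const_mul _) (hw.const_mul _), integral_const_mul,
        integral_const_mul]
      have hsb : √b ^ 2 = b := sq_sqrt hb.le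
      field_simp
      rw [hsb]
      ring

lemma intervalIntegrable_one_sub_sq_rpow {s : ℝ} (hs : -1 < s) :
    IntervalIntegrable (fun t : ℝ => (1 - t ^ 2) ^ s) volume 0 1 := by
  have hsub : IntervalIntegrable (fun t : ℝ => (1 - t) ^ s) volume 0 1 := by
    simpa using ((intervalIntegrable_rpow' (a := 0) (b := 1) hs).comp_sub_left 1).symm
  have hprod : IntervalIntegrable (fun t : ℝ => (1 + t) ^ s * (1 - t) ^ s) volume 0 1 := by
    refine hsub.continuousOn_mul (ContinuousOn.rpow_const (by fun_prop) fun t ht => ?_)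
    rw [uIcc_of_le zero_le_one] at ht
    exact Or.inl (by linarith [ht.1])
  refine hprod.congr fun t ht => ?_
  rw [uIoc_of_le zero_le_one] at ht
  rw [show (1 : ℝ) - t ^ 2 = (1 + t) * (1 - t) by ring,
    mul_rpow (by linarith [ht.1]) (by linarith [ht.2])]

lemma integral_one_sub_sq_rpow_eq {s : ℝ} (hs : -1 < s) :
    ∫ t in (0 : ℝ)..1, (1 - t ^ 2) ^ s =
      (2 * s + 3) * ∫ t in (0 : ℝ)..1, t ^ 2 * (1 - t ^ 2) ^ s := by
  have hw := intervalIntegrable_one_sub_sq_rpow hs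
  have hwt : IntervalIntegrable (fun t : ℝ => t ^ 2 * (1 - t ^ 2) ^ s) volume 0 1 :=
    hw.continuousOn_mul (by fun_prop)
  have hcont : ContinuousOn (fun t : ℝ => t * (1 - t ^ 2) ^ (s + 1)) (Icc 0 1) :=
    continuousOn_id.mul (ContinuousOn.rpow_const (by fun_prop) fun _ _ => Or.inr (by linarith))
  have hderiv : ∀ t ∈ Ioo (0 : ℝ) 1, HasDerivAt (fun t : ℝ => t * (1 - t ^ 2) ^ (s + 1))
      ((1 - t ^ 2) ^ s - (2 * s + 3) * (t ^ 2 * (1 - t ^ 2) ^ s)) t := by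
    intro t ht
    have hpos : 0 < 1 - t ^ 2 := by nlinarith [ht.1, ht.2]
    have hbase : HasDerivAt (fun t : ℝ => 1 - t ^ 2) (-(2 * t)) t := by
      simpa using (hasDerivAt_pow 2 t).const_sub 1
    have h := (hasDerivAt_id' t).fun_mul
      ((hasDerivAt_rpow_const (p := s + 1) (Or.inl hpos.ne')).comp t hbase)
    refine h.congr_deriv ?_
    simp only [Function.comp_apply, one_mul, add_sub_cancel_right]
    rw [rpow_add hpos, rpow_one]
    ring
  have hftc := integral_eq_sub_of_hasDerivAt_of_le zero_le_one hcont hderiv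
    (hw.sub (hwt.const_mul _))
  rw [integral_sub hw (hwt.const_mul _), integral_const_mul] at hftc
  simp only [one_pow, sub_self, zero_rpow (by linarith : s + 1 ≠ 0), mul_zero, ne_eq,
    OfNat.ofNat_ne_zero, not_false_eq_true, zero_pow, sub_zero] at hftc
  linarith

lemma integral_sq_mul_one_sub_sq_rpow_pos {s : ℝ} (hs : -1 < s) :
    0 < ∫ t in (0 : ℝ)..1, t ^ 2 * (1 - t ^ 2) ^ s :=
  intervalIntegral_pos_of_pos_on
    ((intervalIntegrable_one_sub_sq_rpow hs).continuousOn_mul (by fun_prop))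
    (fun t ht => mul_pos (pow_pos ht.1 2) (rpow_pos_of_pos (by nlinarith [ht.1, ht.2]) s))
    zero_lt_one

/-- The auxiliary optimisation problem: if `a/b ≤ n−1`, the supremum over
`γ ≥ 0` of `(1+γ²)^{-1/2} ∫₀¹ √(aγ²t²+b) (1−t²)^{(n−4)/2} dt` is attained at
`γ = 0`; if `a/b < n−1`, then `γ = 0` is the unique maximizer. -/
theorem auxiliary_optimisation (n : ℕ) (hn : 2 < n)
    (a b : ℝ) (ha : 0 < a) (hb : 0 < b) (hab : a / b ≤ (n : ℝ) - 1) :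
    (∀ γ : ℝ, 0 ≤ γ →
      (1 / Real.sqrt (1 + γ ^ 2)) *
          ∫ t in (0 : ℝ)..1, Real.sqrt (a * (γ * t) ^ 2 + b) *
            (1 - t ^ 2) ^ (((n : ℝ) - 4) / 2) ≤
        ∫ t in (0 : ℝ)..1, Real.sqrt b * (1 - t ^ 2) ^ (((n : ℝ) - 4) / 2)) ∧
    (a / b < (n : ℝ) - 1 → ∀ γ : ℝ, 0 < γ →
      (1 / Real.sqrt (1 + γ ^ 2)) *
          ∫ t in (0 : ℝ)..1, Real.sqrt (a * (γ * t) ^ 2 + b) *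
            (1 - t ^ 2) ^ (((n : ℝ) - 4) / 2) <
        ∫ t in (0 : ℝ)..1, Real.sqrt b * (1 - t ^ 2) ^ (((n : ℝ) - 4) / 2)) := by
  set s : ℝ := ((n : ℝ) - 4) / 2 with hs_def
  have hs : -1 < s := by
    have : (3 : ℝ) ≤ n := by exact_mod_cast hn
    linarith
  have hbound := inv_sqrt_mul_integral_sqrt_le (intervalIntegrable_one_sub_sq_rpow hs)
    (fun t ht => rpow_nonneg (by nlinarith [ht.1, ht.2]) s) ha.le hb
  set W := ∫ t in (0 : ℝ)..1, (1 - t ^ 2) ^ s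
  set T := ∫ t in (0 : ℝ)..1, t ^ 2 * (1 - t ^ 2) ^ s
  have hWT : W = (2 * s + 3) * T := integral_one_sub_sq_rpow_eq hs
  have hgap : b * W - a * T = (b * ((n : ℝ) - 1) - a) * T := by
    rw [hWT, hs_def]
    ring
  have hT : 0 < T := integral_sq_mul_one_sub_sq_rpow_pos hs
  rw [integral_const_mul]
  constructor
  · intro γ _
    refine (hbound γ).trans (sub_le_self _ (div_nonneg (mul_nonneg (sq_nonneg γ) ?_) ?_))
    · rw [hgap]
      exact mul_nonneg (by rw [div_le_iff₀ hb] at hab; linarith) hT.le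
    · positivity
  · intro hab' γ hγ
    refine (hbound γ).trans_lt (sub_lt_self _ (div_pos (mul_pos (by positivity) ?_) ?_))
    · rw [hgap]
      exact mul_pos (by rw [div_lt_iff₀ hb] at hab'; linarith) hT
    · positivity
end
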